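/- Let G be a finite group, p a prime, and H a subgroup of G. Let A be an abelian normal subgroup of H which is a p-group and whose index [H : A] is coprime to p (i.e., A is an abelian normal Sylow p-subgroup of H). Suppose that for every g ∈ G, the index [H : H ∩ gHg⁻¹] is coprime to p. Then A is a normal subgroup of G. -/

import Mathlib

/-!
Inside `H` the subgroup `A` is the unique Sylow `p`-subgroup, so it lies in every subgroup of
`H` of index prime to `p`; in particular `A ≤ g⁻¹Hg` for every `g`. Hence every conjugate
`gAg⁻¹` is a `p`-subgroup of `H`, and so it lies in the normal Sylow subgroup `A` of `H`.
-/

section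

open Subgroup

variable {G : Type*} [Group G] {p : ℕ} [Fact p.Prime]

theorem IsPGroup.normal_le_of_not_dvd_index [Finite G] {N K : Subgroup G} [N.Normal]
    (hN : IsPGroup p N) (hK : ¬ p ∣ K.index) : N ≤ K := by
  obtain ⟨Q⟩ : Nonempty (Sylow p K) := inferInstance
  have hQ : ¬ p ∣ (Q.1.map K.subtype).index := by
    rw [index_map_subtype, Nat.Prime.dvd_mul Fact.out]
    exact not_or_intro Q.not_dvd_index hK
  calc N ≤ (Q.isPGroup'.map K.subtype).toSylow hQ := hN.le_sylow_of_normal _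
    _ ≤ K := map_subtype_le _

theorem IsPGroup.le_normal_of_not_dvd_index {P N : Subgroup G} [N.Normal]
    (hP : IsPGroup p P) (hN : IsPGroup p N) (hN' : ¬ p ∣ N.index) : P ≤ N :=
  le_sup_left.trans ((hN.toSylow hN').is_maximal' (hP.to_sup_of_normal_right hN) le_sup_right).le

theorem Subgroup.le_of_subgroupOf_le_subgroupOf {A H K : Subgroup G} (hA : A ≤ H)
    (h : A.subgroupOf H ≤ K.subgroupOf H) : A ≤ K := by
  have := map_mono (f := H.subtype) h
  rw [subgroupOf_map_subtype, subgroupOf_map_subtype, inf_of_le_left hA] at this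
  exact this.trans inf_le_left

end

theorem abelian_normal_sylow_is_normal_in_ambient_general {G : Type*} [Group G] [Finite G]
    (p : ℕ) (hp : p.Prime) (H A : Subgroup G) (hAH : A ≤ H)
    (hApg : IsPGroup p A)
    (hAnorm : (A.subgroupOf H).Normal)
    (hAidx : Nat.Coprime (A.subgroupOf H).index p)
    (hconj : ∀ g : G,
      Nat.Coprime (((H ⊓ H.map (MulAut.conj g).toMonoidHom).subgroupOf H).index) p) :
    A.Normal := by
  have := Fact.mk hp
  have not_dvd {n : ℕ} (h : n.Coprime p) : ¬ p ∣ n := hp.coprime_iff_not_dvd.mp h.symm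
  have hA : IsPGroup p (A.subgroupOf H) := hApg.comap_subtype
  have le_conj (g : G) : A ≤ H.map (MulAut.conj g).toMonoidHom :=
    Subgroup.le_of_subgroupOf_le_subgroupOf hAH <| by
      simpa only [Subgroup.inf_subgroupOf_left] using
        hA.normal_le_of_not_dvd_index (not_dvd (hconj g))
  have conj_le (g : G) : A.map (MulAut.conj g).toMonoidHom ≤ H := by
    have hcomp : (MulAut.conj g).toMonoidHom.comp (MulAut.conj g⁻¹).toMonoidHom = .id G := by
      ext; simp [mul_assoc]
    simpa only [Subgroup.map_map, hcomp, Subgroup.map_id] using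
      Subgroup.map_mono (f := (MulAut.conj g).toMonoidHom) (le_conj g⁻¹)
  have conj_le_self (g : G) : A.map (MulAut.conj g).toMonoidHom ≤ A :=
    Subgroup.le_of_subgroupOf_le_subgroupOf (conj_le g) <|
      (hApg.map _).comap_subtype.le_normal_of_not_dvd_index hA (not_dvd hAidx)
  exact ⟨fun a ha g => conj_le_self g (Subgroup.mem_map_of_mem _ ha)⟩

/-- Group-theoretic claim inside the proof of Theorem 3.4: let `G` be a finite group,
`H ≤ G`, `p` a prime, and `A ≤ H` an abelian `p`-subgroup which is normal in `H` and
whose index in `H` is coprime to `p` (an abelian normal Sylow `p`-subgroup of `H`).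
If for every `g ∈ G` the index of `H ∩ gHg⁻¹` in `H` is coprime to `p`, then `A` is
normal in all of `G`. -/
theorem abelian_normal_sylow_is_normal_in_ambient {G : Type*} [Group G] [Finite G]
    (p : ℕ) (hp : p.Prime) (H A : Subgroup G) (hAH : A ≤ H)
    (hab : IsMulCommutative A) (hApg : IsPGroup p A)
    (hAnorm : (A.subgroupOf H).Normal)
    (hAidx : Nat.Coprime (A.subgroupOf H).index p)
    (hconj : ∀ g : G,
      Nat.Coprime (((H ⊓ H.map (MulAut.conj g).toMonoidHom).subgroupOf H).index) p) :
    A.Normal :=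
  abelian_normal_sylow_is_normal_in_ambient_general p hp H A hAH hApg hAnorm hAidx hconj
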